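/- Let G be a finite abelian group with smallest prime divisor p of |G|, and let S and T be sequences over G such that every term g of T satisfies g ∉ ⟨supp(S)⟩. If |T| ≤ 2p − 1 and the index |⟨supp(T·S)⟩ / ⟨supp(S)⟩| ≥ 2p, then |Σ₀(T·S)| ≥ (|T| + 1)·|Σ₀(S)|, where T·S denotes the concatenation (multiset sum) of T and S. -/

import Mathlib

/-- The set of sums over nonempty subsequences (sub-multisets) of the sequence `S`. -/
def seqSums {G : Type*} [AddCommGroup G] (S : Multiset G) : Set G :=
  {x | ∃ T : Multiset G, T ≤ S ∧ T ≠ 0 ∧ T.sum = x}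

/-- `seqSums S` together with `0`. -/
def seqSums0 {G : Type*} [AddCommGroup G] (S : Multiset G) : Set G :=
  seqSums S ∪ {0}

open Classical in
/-- A sequence `S` over `G` is regular if for every proper subgroup `H ⊊ G`,
at most `|H| - 1` terms of `S` (counted with multiplicity) lie in `H`. -/
def IsRegularSeq {G : Type*} [AddCommGroup G] (S : Multiset G) : Prop :=
  ∀ H : AddSubgroup G, H ≠ ⊤ →
    Multiset.card (S.filter (fun g => g ∈ H)) ≤ Nat.card H - 1

/-- The Davenport constant: the smallest `t` such that every sequence over `G` of length
at least `t` contains a nonempty zero-sum subsequence. -/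
noncomputable def davenport (G : Type*) [AddCommGroup G] : ℕ :=
  sInf {t : ℕ | ∀ S : Multiset G, t ≤ Multiset.card S →
    ∃ T : Multiset G, T ≤ S ∧ T ≠ 0 ∧ T.sum = 0}

/-- The set of sums over nonempty subsets of the finite set `S`. -/
def setSums {G : Type*} [AddCommGroup G] (S : Finset G) : Set G :=
  {x | ∃ T : Finset G, T ⊆ S ∧ T.Nonempty ∧ (∑ g ∈ T, g) = x}

/-- `setSums S` together with `0`. -/
def setSums0 {G : Type*} [AddCommGroup G] (S : Finset G) : Set G :=
  setSums S ∪ {0}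

section Aux

variable {G : Type*} [AddCommGroup G]

lemma zero_mem_seqSums0 (S : Multiset G) : (0 : G) ∈ seqSums0 S := Or.inr rfl

lemma sum_mem_seqSums0 {S U : Multiset G} (h : U ≤ S) : U.sum ∈ seqSums0 S := by
  rcases eq_or_ne U 0 with rfl | hU
  · simpa using zero_mem_seqSums0 S
  · exact Or.inl ⟨U, h, hU, rfl⟩

lemma mem_seqSums0_of_mem {S : Multiset G} {a : G} (h : a ∈ S) : a ∈ seqSums0 S := by
  have : ({a} : Multiset G).sum ∈ seqSums0 S :=
    sum_mem_seqSums0 (by simpa [Multiset.singleton_le] using h)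
  simpa using this

lemma le_cons_iff' {α : Type*} [DecidableEq α] {a : α} {T U : Multiset α} :
    U ≤ a ::ₘ T ↔ U ≤ T ∨ ∃ V, V ≤ T ∧ U = a ::ₘ V := by
  constructor
  · intro h
    by_cases ha : a ∈ U
    · right
      refine ⟨U.erase a, ?_, (Multiset.cons_erase ha).symm⟩
      have h2 := Multiset.erase_le_erase a h
      rwa [Multiset.erase_cons_head] at h2
    · left
      rw [Multiset.le_iff_count] at h ⊢
      intro b
      rcases eq_or_ne b a with rfl | hb
      · simp [Multiset.count_eq_zero_of_notMem ha]
      · have := h b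
        rwa [Multiset.count_cons_of_ne hb] at this
  · rintro (h | ⟨V, hV, rfl⟩)
    · exact le_trans h (Multiset.le_cons_self _ _)
    · exact Multiset.cons_le_cons _ hV

lemma seqSums0_cons (a : G) (T : Multiset G) :
    seqSums0 (a ::ₘ T) = seqSums0 T ∪ (fun x => a + x) '' seqSums0 T := by
  classical
  ext x
  constructor
  · rintro (⟨U, hU, hU0, rfl⟩ | rfl)
    · rcases le_cons_iff'.1 hU with h | ⟨V, hV, rfl⟩
      · exact Or.inl (Or.inl ⟨U, h, hU0, rfl⟩)
      · exact Or.inr ⟨V.sum, sum_mem_seqSums0 hV, (Multiset.sum_cons a V).symm⟩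
    · exact Or.inl (zero_mem_seqSums0 T)
  · rintro (h | ⟨y, hy, rfl⟩)
    · rcases h with ⟨U, hU, hU0, rfl⟩ | rfl
      · exact Or.inl ⟨U, le_trans hU (Multiset.le_cons_self _ _), hU0, rfl⟩
      · exact Or.inr rfl
    · rcases hy with ⟨U, hU, hU0, rfl⟩ | rfl
      · exact Or.inl ⟨a ::ₘ U, Multiset.cons_le_cons _ hU, Multiset.cons_ne_zero,
          Multiset.sum_cons a U⟩
      · simpa using mem_seqSums0_of_mem (Multiset.mem_cons_self a T)

lemma seqSums0_zero : seqSums0 (0 : Multiset G) = {0} := by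
  ext x
  constructor
  · rintro (⟨U, hU, h0, rfl⟩ | rfl)
    · exact absurd (Multiset.le_zero.1 hU) h0
    · rfl
  · rintro rfl
    exact Or.inr rfl

/-- Key dichotomy: either the subsequence sums are many, or they are invariant under a
nontrivial subgroup. -/
lemma lemC [Finite G] (T : Multiset G) (hnz : ∀ g ∈ T, g ≠ 0) :
    Multiset.card T + 1 ≤ (seqSums0 T).ncard ∨
    ∃ W : AddSubgroup G, W ≠ ⊥ ∧ ∀ x ∈ seqSums0 T, ∀ w ∈ W, x + w ∈ seqSums0 T := by
  induction T using Multiset.induction_on with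
  | empty =>
    left
    simp [seqSums0_zero]
  | cons a T ih =>
    have ha : a ≠ 0 := hnz a (Multiset.mem_cons_self a T)
    have hnz' : ∀ g ∈ T, g ≠ 0 := fun g hg => hnz g (Multiset.mem_cons_of_mem hg)
    rcases ih hnz' with hcard | ⟨W, hW, hinv⟩
    · by_cases hsub : (fun x => a + x) '' seqSums0 T ⊆ seqSums0 T
      · -- stuck : seqSums0 (a ::ₘ T) = seqSums0 T, invariant under zmultiples a
        right
        have hEq : (fun x => a + x) '' seqSums0 T = seqSums0 T := by
          apply Set.eq_of_subset_of_ncard_le hsub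
          rw [Set.ncard_image_of_injective _ (add_right_injective a)]
        have hcons : seqSums0 (a ::ₘ T) = seqSums0 T := by
          rw [seqSums0_cons, hEq, Set.union_self]
        have hfwd : ∀ x ∈ seqSums0 T, a + x ∈ seqSums0 T := fun x hx =>
          hsub ⟨x, hx, rfl⟩
        have hbwd : ∀ x ∈ seqSums0 T, -a + x ∈ seqSums0 T := by
          intro x hx
          rw [← hEq] at hx
          rcases hx with ⟨y, hy, rfl⟩
          simpa using hy
        have key : ∀ n : ℤ, ∀ x ∈ seqSums0 T, x + n • a ∈ seqSums0 T := by
          intro n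
          induction n using Int.induction_on with
          | zero => simp
          | succ n ihn =>
            intro x hx
            have h2 := hfwd _ (ihn x hx)
            have : x + ((n : ℤ) + 1) • a = a + (x + (n : ℤ) • a) := by
              rw [add_zsmul, one_zsmul]; abel
            rw [this]
            exact h2
          | pred n ihn =>
            intro x hx
            have h2 := hbwd _ (ihn x hx)
            have : x + (-(n : ℤ) - 1) • a = -a + (x + (-(n : ℤ)) • a) := by
              rw [sub_zsmul, one_zsmul]; abel
            rw [this]
            exact h2
        refine ⟨AddSubgroup.zmultiples a, ?_, ?_⟩
        · intro h
          exact ha (AddSubgroup.zmultiples_eq_bot.1 h)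
        · intro x hx w hw
          rw [hcons] at hx ⊢
          rcases AddSubgroup.mem_zmultiples_iff.1 hw with ⟨n, rfl⟩
          exact key n x hx
      · -- growth
        left
        rw [Set.not_subset] at hsub
        obtain ⟨z, hz, hz'⟩ := hsub
        have hsubset : insert z (seqSums0 T) ⊆ seqSums0 (a ::ₘ T) := by
          rw [seqSums0_cons]
          intro y hy
          rcases hy with rfl | hy
          · exact Or.inr hz
          · exact Or.inl hy
        calc Multiset.card (a ::ₘ T) + 1 = (Multiset.card T + 1) + 1 := by
              rw [Multiset.card_cons]
          _ ≤ (seqSums0 T).ncard + 1 := by omega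
          _ = (insert z (seqSums0 T)).ncard := by
              rw [Set.ncard_insert_of_notMem hz' (Set.toFinite _)]
          _ ≤ (seqSums0 (a ::ₘ T)).ncard := Set.ncard_le_ncard hsubset (Set.toFinite _)
    · -- propagate invariance
      right
      refine ⟨W, hW, ?_⟩
      intro x hx w hw
      rw [seqSums0_cons] at hx ⊢
      rcases hx with hx | ⟨y, hy, rfl⟩
      · exact Or.inl (hinv x hx w hw)
      · exact Or.inr ⟨y + w, hinv y hy w hw, by show a + (y + w) = (a + y) + w; abel⟩

/-- Claim A: if no enough elements lie in a subgroup, the sums are plentiful. -/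
lemma claimA [Finite G] (p : ℕ)
    (hsub : ∀ W : AddSubgroup G, W ≠ ⊥ → p ≤ Nat.card W)
    (T : Multiset G) (hnz : ∀ g ∈ T, g ≠ 0)
    (hk : Multiset.card T ≤ 2 * p - 1) (hp1 : 1 ≤ p)
    (hgen : 2 * p ≤ Nat.card (AddSubgroup.closure {x : G | x ∈ T})) :
    Multiset.card T + 1 ≤ Nat.card (seqSums0 T) := by
  rw [Nat.card_coe_set_eq]
  have hk2 : Multiset.card T + 1 ≤ 2 * p := by omega
  rcases lemC T hnz with h | ⟨W, hW, hinv⟩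
  · exact h
  have hWp : p ≤ Nat.card W := hsub W hW
  have hWsub : (W : Set G) ⊆ seqSums0 T := by
    intro w hw
    simpa using hinv 0 (zero_mem_seqSums0 T) w hw
  have hWcard : (W : Set G).ncard = Nat.card W := by
    rw [← Nat.card_coe_set_eq]
    rfl
  by_cases hconv : seqSums0 T ⊆ (W : Set G)
  · have heq : seqSums0 T = (W : Set G) := Set.Subset.antisymm hconv hWsub
    have hsupp : AddSubgroup.closure {x : G | x ∈ T} ≤ W := by
      rw [AddSubgroup.closure_le]
      intro x hx
      have hx2 : x ∈ seqSums0 T := mem_seqSums0_of_mem hx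
      rw [heq] at hx2
      exact hx2
    have h2 : 2 * p ≤ Nat.card W :=
      le_trans hgen (AddSubgroup.card_le_of_le hsupp)
    rw [heq, hWcard]
    omega
  · rw [Set.not_subset] at hconv
    obtain ⟨x, hx, hxW⟩ := hconv
    have himg : (fun w => x + w) '' (W : Set G) ⊆ seqSums0 T := by
      rintro y ⟨w, hw, rfl⟩
      exact hinv x hx w hw
    have hdisj : Disjoint (W : Set G) ((fun w => x + w) '' (W : Set G)) := by
      rw [Set.disjoint_left]
      rintro y hy ⟨w, hw, rfl⟩
      apply hxW
      have : x = (x + w) + (-w) := by abel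
      rw [this]
      exact W.add_mem hy (W.neg_mem hw)
    have hcup : (W : Set G) ∪ (fun w => x + w) '' (W : Set G) ⊆ seqSums0 T :=
      Set.union_subset hWsub himg
    have hcard : ((W : Set G) ∪ (fun w => x + w) '' (W : Set G)).ncard
        = 2 * Nat.card W := by
      rw [Set.ncard_union_eq hdisj (Set.toFinite _) (Set.toFinite _),
        Set.ncard_image_of_injective _ (add_right_injective x), hWcard]
      omega
    have := Set.ncard_le_ncard hcup (Set.toFinite _)
    rw [hcard] at this
    omega

lemma exists_map_le {α β : Type*} (f : α → β) (T : Multiset α) :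
    ∀ U : Multiset β, U ≤ T.map f → ∃ V, V ≤ T ∧ V.map f = U := by
  classical
  induction T using Multiset.induction_on with
  | empty =>
    intro U hU
    simp only [Multiset.map_zero, Multiset.le_zero] at hU
    exact ⟨0, le_refl _, by simp [hU]⟩
  | cons a T ih =>
    intro U hU
    rw [Multiset.map_cons] at hU
    rcases le_cons_iff'.1 hU with h | ⟨V, hV, rfl⟩
    · obtain ⟨V, hV, rfl⟩ := ih _ h
      exact ⟨V, le_trans hV (Multiset.le_cons_self _ _), rfl⟩
    · obtain ⟨V', hV', rfl⟩ := ih _ hV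
      exact ⟨a ::ₘ V', Multiset.cons_le_cons _ hV', by simp⟩

lemma seqSums0_map {H : Type*} [AddCommGroup H] (f : G →+ H) (T : Multiset G) :
    seqSums0 (T.map f) = f '' seqSums0 T := by
  ext x
  constructor
  · rintro (⟨U, hU, hU0, rfl⟩ | rfl)
    · obtain ⟨V, hV, rfl⟩ := exists_map_le f T U hU
      refine ⟨V.sum, Or.inl ⟨V, hV, ?_, rfl⟩, ?_⟩
      · rintro rfl
        simp at hU0
      · exact map_multiset_sum f V
    · exact ⟨0, Or.inr rfl, map_zero f⟩
  · rintro ⟨y, (⟨U, hU, hU0, rfl⟩ | rfl), rfl⟩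
    · exact Or.inl ⟨U.map f, Multiset.map_le_map hU, by simpa using hU0,
        (map_multiset_sum f U).symm⟩
    · rw [map_zero]
      exact Or.inr rfl

lemma add_mem_seqSums0 {S T : Multiset G} {x y : G}
    (hx : x ∈ seqSums0 T) (hy : y ∈ seqSums0 S) : x + y ∈ seqSums0 (T + S) := by
  rcases hx with ⟨U, hU, hU0, rfl⟩ | rfl
  · rcases hy with ⟨V, hV, hV0, rfl⟩ | rfl
    · refine Or.inl ⟨U + V, add_le_add hU hV, ?_, (Multiset.sum_add U V)⟩
      intro h
      apply hU0
      have := congrArg Multiset.card h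
      simp only [Multiset.card_add, Multiset.card_zero] at this
      exact Multiset.card_eq_zero.1 (by omega)
    · rw [add_zero]
      exact Or.inl ⟨U, le_trans hU (Multiset.le_add_right _ _), hU0, rfl⟩
  · rcases hy with ⟨V, hV, hV0, rfl⟩ | rfl
    · rw [zero_add]
      exact Or.inl ⟨V, le_trans hV (Multiset.le_add_left _ _), hV0, rfl⟩
    · rw [add_zero]
      exact zero_mem_seqSums0 _

lemma seqSums0_subset_closure (S : Multiset G) :
    seqSums0 S ⊆ (AddSubgroup.closure {x : G | x ∈ S} : Set G) := by
  rintro x (⟨U, hU, hU0, rfl⟩ | rfl)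
  · exact AddSubgroup.multiset_sum_mem _ _
      (fun a ha => AddSubgroup.subset_closure (Multiset.mem_of_le hU ha))
  · exact (AddSubgroup.closure _).zero_mem

end Aux

/-- Let `S, T` be sequences over `G` such that no term of `T` lies in
`⟨supp S⟩`. If `|T| ≤ 2p - 1` and the index of `⟨supp S⟩` in `⟨supp (T ⬝ S)⟩` is at least
`2p`, where `p` is the smallest prime divisor of `|G|`, then
`|Σ₀(T ⬝ S)| ≥ (|T| + 1) ⬝ |Σ₀(S)|`. -/
theorem coset_sums_long (G : Type*) [AddCommGroup G] [Finite G]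
    (h1 : 1 < Nat.card G) (p : ℕ) (hp : p = (Nat.card G).minFac)
    (S T : Multiset G)
    (hT : ∀ g ∈ T, g ∉ AddSubgroup.closure {x : G | x ∈ S})
    (hlen : Multiset.card T ≤ 2 * p - 1)
    (hidx : 2 * p ≤ (AddSubgroup.closure {x : G | x ∈ S}).relIndex
      (AddSubgroup.closure {x : G | x ∈ T + S})) :
    (Multiset.card T + 1) * Nat.card (seqSums0 S) ≤ Nat.card (seqSums0 (T + S)) := by
  classical
  set H := AddSubgroup.closure {x : G | x ∈ S} with hH
  set K := AddSubgroup.closure {x : G | x ∈ T + S} with hK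
  let π : G →+ G ⧸ H := QuotientAddGroup.mk' H
  have hpp : p.Prime := hp ▸ Nat.minFac_prime (by omega)
  have hp1 : 1 ≤ p := hpp.one_lt.le
  -- smallest prime condition in the quotient
  have hsubQ : ∀ W : AddSubgroup (G ⧸ H), W ≠ ⊥ → p ≤ Nat.card W := by
    intro W hWbot
    have h2 : 1 < Nat.card W := (AddSubgroup.one_lt_card_iff_ne_bot W).2 hWbot
    have hdvd : Nat.card W ∣ Nat.card G :=
      (AddSubgroup.card_addSubgroup_dvd_card W).trans (AddSubgroup.card_quotient_dvd_card H)
    rw [hp]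
    exact Nat.minFac_le_of_dvd h2 hdvd
  -- images of T are nonzero
  have hπ0 : ∀ x : G, π x = 0 ↔ x ∈ H := by
    intro x
    exact QuotientAddGroup.eq_zero_iff x
  have hnzQ : ∀ g ∈ T.map ⇑π, g ≠ 0 := by
    intro g hg
    rw [Multiset.mem_map] at hg
    obtain ⟨t, ht, rfl⟩ := hg
    intro h0
    exact hT t ht ((hπ0 t).1 h0)
  -- the closure of the image of T has cardinality ≥ 2p
  have hmapK : K.map π = AddSubgroup.closure {x : G ⧸ H | x ∈ T.map ⇑π} := by
    have h1' : {x : G | x ∈ T + S} = {x : G | x ∈ T} ∪ {x : G | x ∈ S} := by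
      ext y
      simp [Multiset.mem_add]
    have h2' : ⇑π '' {x : G | x ∈ T} = {x : G ⧸ H | x ∈ T.map ⇑π} := by
      ext y
      simp [Multiset.mem_map, Set.mem_image]
    have h3' : AddSubgroup.closure (⇑π '' {x : G | x ∈ S}) = ⊥ := by
      rw [eq_bot_iff, AddSubgroup.closure_le]
      rintro y ⟨x, hx, rfl⟩
      have : π x = 0 := (hπ0 x).2 (AddSubgroup.subset_closure hx)
      simp [this]
    rw [hK, AddMonoidHom.map_closure, h1', Set.image_union, AddSubgroup.closure_union,
      h3', sup_bot_eq, h2']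
  have hrel : H.relIndex K = Nat.card (K.map π) := by
    have hker : (QuotientAddGroup.mk' H).ker = H := QuotientAddGroup.ker_mk' H
    calc H.relIndex K = (QuotientAddGroup.mk' H).ker.relIndex K := by rw [hker]
      _ = Nat.card (K.map π) := AddSubgroup.relIndex_ker _ _
  have hgenQ : 2 * p ≤ Nat.card (AddSubgroup.closure {x : G ⧸ H | x ∈ T.map ⇑π}) := by
    rw [← hmapK, ← hrel]
    exact hidx
  -- apply Claim A in the quotient
  have hkQ : Multiset.card (T.map ⇑π) ≤ 2 * p - 1 := by
    rwa [Multiset.card_map]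
  have hD : Multiset.card T + 1 ≤ Nat.card (seqSums0 (T.map ⇑π)) := by
    have := claimA p hsubQ (T.map ⇑π) hnzQ hkQ hp1 hgenQ
    rwa [Multiset.card_map] at this
  -- choose representatives
  have hTS : ∀ d : seqSums0 (T.map ⇑π), ∃ y, y ∈ seqSums0 T ∧ π y = (d : G ⧸ H) := by
    intro d
    have hd : (d : G ⧸ H) ∈ ⇑π '' seqSums0 T := by
      rw [← seqSums0_map π T]
      exact d.2
    obtain ⟨y, hy, hyd⟩ := hd
    exact ⟨y, hy, hyd⟩
  choose y hy hyd using hTS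
  -- build the injection
  let F : (seqSums0 (T.map ⇑π)) × (seqSums0 S) → (seqSums0 (T + S)) :=
    fun z => ⟨y z.1 + (z.2 : G), add_mem_seqSums0 (hy z.1) z.2.2⟩
  have hFinj : Function.Injective F := by
    rintro ⟨d, x⟩ ⟨e, x'⟩ hF
    have h' : y d + (x : G) = y e + (x' : G) := congrArg Subtype.val hF
    have hx0 : π (x : G) = 0 := (hπ0 _).2 (seqSums0_subset_closure S x.2)
    have hx0' : π (x' : G) = 0 := (hπ0 _).2 (seqSums0_subset_closure S x'.2)
    have hπeq : π (y d + (x : G)) = π (y e + (x' : G)) := congrArg π h'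
    rw [map_add, map_add, hx0, hx0', add_zero, add_zero, hyd, hyd] at hπeq
    have hde : d = e := Subtype.ext hπeq
    subst hde
    have hxx : (x : G) = (x' : G) := by
      have := h'
      exact add_left_cancel this
    have : x = x' := Subtype.ext hxx
    rw [this]
  have hcardle : Nat.card ((seqSums0 (T.map ⇑π)) × (seqSums0 S)) ≤
      Nat.card (seqSums0 (T + S)) :=
    Nat.card_le_card_of_injective F hFinj
  rw [Nat.card_prod] at hcardle
  calc (Multiset.card T + 1) * Nat.card (seqSums0 S)
      ≤ Nat.card (seqSums0 (T.map ⇑π)) * Nat.card (seqSums0 S) :=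
        Nat.mul_le_mul_right _ hD
    _ ≤ Nat.card (seqSums0 (T + S)) := hcardle
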